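/- Let 0 < p < 1, q = 1 - p, and let B be the infinite nonnegative matrix on S = {1, 2, 3, ...} with B(x, x+1) = p for all x ≥ 1, B(x, x-1) = q for all x ≥ 2, and all other entries 0. Then for every real λ with 0 < λ < 2·√(p·q) and every x ∈ S, the series ∑_{n=0}^{∞} λ^{-n}·B^n(x, x) diverges to infinity. -/

import Mathlib

open Filter

/-- The birth-death matrix on `S = {1, 2, 3, ...}` (embedded in `ℕ`, with row/column `0`
identically zero). -/
noncomputable def bdB (p : ℝ) : ℕ → ℕ → ℝ := fun x y =>
  if 1 ≤ x ∧ y = x + 1 then p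
  else if 2 ≤ x ∧ y + 1 = x then 1 - p
  else 0

/-- Matrix powers: `B^0 = I`, `B^{n+1}(x,y) = ∑_w B^n(x,w) B(w,y)`. -/
noncomputable def matPow {S : Type*} [DecidableEq S] (B : S → S → ℝ) : ℕ → S → S → ℝ
  | 0 => fun x y => if x = y then (1 : ℝ) else 0
  | n + 1 => fun x y => ∑' w, matPow B n x w * B w y

/-!
Conjugating `B` by `s^y`, where `s = √(q/p) = √(pq)/p`, turns it into `√(pq)` times the adjacency
matrix of the half-line, whose restriction to `{1, …, m}` has the positive eigenvector
`sin (π y / (m + 1))` with eigenvalue `2 cos (π / (m + 1))`. Undoing the conjugation,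
`φ(y) = s^y sin (π y / (m + 1))`, cut off beyond `m`, satisfies `Bφ ≥ μ φ` with
`μ = 2 √(pq) cos (π / (m + 1))`, hence `Bⁿφ ≥ μⁿφ`. As `B` is reversible for the weights `(p/q)^y`,
Cauchy–Schwarz turns this into `B²ⁿ(x,x) ≥ c μ²ⁿ` with `c > 0`. Since `μ → 2√(pq)` as `m → ∞`,
some `μ` exceeds `λ`, and then the terms `λ⁻²ⁿ B²ⁿ(x,x)` of the series are unbounded.
-/

open Finset

def IsNearestNeighbourKernel (B : ℕ → ℕ → ℝ) : Prop :=
  ∀ a b, a ≠ b + 1 → b ≠ a + 1 → B a b = 0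

namespace IsNearestNeighbourKernel

variable {B : ℕ → ℕ → ℝ}

theorem matPow_succ_right (hB : IsNearestNeighbourKernel B) (n x y : ℕ) :
    matPow B (n + 1) x y =
      matPow B n x (y + 1) * B (y + 1) y + matPow B n x (y - 1) * B (y - 1) y := by
  change ∑' w, _ = _
  rw [tsum_eq_sum (s := {y + 1, y - 1}), sum_pair (by omega)]
  intro w hw
  simp only [mem_insert, mem_singleton, not_or] at hw
  rw [hB w y (by omega) (by omega), mul_zero]

theorem matPow_succ_left (hB : IsNearestNeighbourKernel B) (n x y : ℕ) :
    matPow B (n + 1) x y =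
      B x (x + 1) * matPow B n (x + 1) y + B x (x - 1) * matPow B n (x - 1) y := by
  induction n generalizing y with
  | zero =>
    rw [hB.matPow_succ_right]
    simp only [matPow]
    have h00 : B 0 0 = 0 := hB 0 0 (by omega) (by omega)
    split_ifs <;> first | omega | (subst_vars; simp_all)
  | succ n ih =>
    rw [hB.matPow_succ_right, ih, ih, hB.matPow_succ_right n (x + 1),
      hB.matPow_succ_right n (x - 1)]
    ring

theorem matPow_nonneg (hB : IsNearestNeighbourKernel B) (hB0 : ∀ a b, 0 ≤ B a b) (n x y : ℕ) :
    0 ≤ matPow B n x y := by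
  induction n generalizing y with
  | zero => simp only [matPow]; positivity
  | succ n ih =>
    rw [hB.matPow_succ_right]
    have := hB0 (y + 1) y
    have := hB0 (y - 1) y
    have := ih (y + 1)
    have := ih (y - 1)
    positivity

theorem matPow_eq_zero_of_lt (hB : IsNearestNeighbourKernel B) {n x y : ℕ} (h : x + n < y) :
    matPow B n x y = 0 := by
  induction n generalizing y with
  | zero => simp only [matPow]; rw [if_neg (by omega)]
  | succ n ih => rw [hB.matPow_succ_right, ih (by omega), ih (by omega)]; ring

theorem matPow_add (hB : IsNearestNeighbourKernel B) (m n x y : ℕ) {N : ℕ} (hN : x + m < N) :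
    matPow B (m + n) x y = ∑ w ∈ range N, matPow B m x w * matPow B n w y := by
  induction n generalizing y with
  | zero =>
    simp only [Nat.add_zero, matPow, mul_ite, mul_one, mul_zero, sum_ite_eq', mem_range]
    split_ifs with hy
    · rfl
    · exact hB.matPow_eq_zero_of_lt (by omega)
  | succ n ih =>
    rw [← add_assoc, hB.matPow_succ_right, ih, ih, sum_mul, sum_mul, ← sum_add_distrib]
    refine sum_congr rfl fun w _ => ?_
    rw [hB.matPow_succ_right]
    ring

theorem matPow_reversible (hB : IsNearestNeighbourKernel B) {ν : ℕ → ℝ}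
    (hν : ∀ a b, ν a * B a b = ν b * B b a) (n x y : ℕ) :
    ν x * matPow B n x y = ν y * matPow B n y x := by
  induction n generalizing y with
  | zero => simp only [matPow]; split_ifs <;> subst_vars <;> simp_all
  | succ n ih =>
    rw [hB.matPow_succ_right, hB.matPow_succ_left]
    linear_combination B (y + 1) y * ih (y + 1) + B (y - 1) y * ih (y - 1)
      + matPow B n (y + 1) x * hν (y + 1) y + matPow B n (y - 1) x * hν (y - 1) y

theorem pow_mul_le_sum_matPow (hB : IsNearestNeighbourKernel B) (hB0 : ∀ a b, 0 ≤ B a b)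
    {μ : ℝ} (hμ : 0 ≤ μ) {φ : ℕ → ℝ} {m : ℕ} (hφ : ∀ w, m < w → φ w = 0)
    (hsub : ∀ y, μ * φ y ≤ B y (y + 1) * φ (y + 1) + B y (y - 1) * φ (y - 1)) (n x : ℕ) :
    μ ^ n * φ x ≤ ∑ w ∈ range (m + 1), matPow B n x w * φ w := by
  induction n generalizing x with
  | zero =>
    simp only [pow_zero, one_mul, matPow, ite_mul, zero_mul, sum_ite_eq, mem_range]
    split_ifs with hx
    · rfl
    · exact (hφ x (by omega)).le
  | succ n ih =>
    have hsplit : ∑ w ∈ range (m + 1), matPow B (n + 1) x w * φ w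
        = B x (x + 1) * ∑ w ∈ range (m + 1), matPow B n (x + 1) w * φ w
          + B x (x - 1) * ∑ w ∈ range (m + 1), matPow B n (x - 1) w * φ w := by
      simp only [hB.matPow_succ_left, mul_sum, ← sum_add_distrib]
      exact sum_congr rfl fun w _ => by ring
    calc μ ^ (n + 1) * φ x = μ ^ n * (μ * φ x) := by ring
      _ ≤ μ ^ n * (B x (x + 1) * φ (x + 1) + B x (x - 1) * φ (x - 1)) := by
        gcongr; exact hsub x
      _ = B x (x + 1) * (μ ^ n * φ (x + 1)) + B x (x - 1) * (μ ^ n * φ (x - 1)) := by ring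
      _ ≤ _ := by rw [hsplit]; gcongr <;> first | exact hB0 _ _ | exact ih _

theorem sq_pow_mul_le_matPow_two_mul (hB : IsNearestNeighbourKernel B) (hB0 : ∀ a b, 0 ≤ B a b)
    {ν : ℕ → ℝ} (hν : ∀ a, 0 < ν a) (hrev : ∀ a b, ν a * B a b = ν b * B b a)
    {μ : ℝ} (hμ : 0 ≤ μ) {φ : ℕ → ℝ} {m : ℕ} (hφ : ∀ w, m < w → φ w = 0)
    (hsub : ∀ y, μ * φ y ≤ B y (y + 1) * φ (y + 1) + B y (y - 1) * φ (y - 1))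
    (n x : ℕ) (hx : 0 ≤ φ x) :
    (μ ^ n * φ x) ^ 2 ≤
      matPow B (2 * n) x x * ∑ w ∈ range (m + 1), ν w * φ w ^ 2 / ν x := by
  have hdiag : ∑ w ∈ range (m + 1), matPow B n x w * matPow B n w x ≤ matPow B (2 * n) x x := by
    rw [two_mul, hB.matPow_add n n x x (N := x + n + m + 1) (by omega)]
    refine sum_le_sum_of_subset_of_nonneg (range_subset_range.2 (by omega)) fun w _ _ => ?_
    exact mul_nonneg (hB.matPow_nonneg hB0 n x w) (hB.matPow_nonneg hB0 n w x)
  calc (μ ^ n * φ x) ^ 2 ≤ (∑ w ∈ range (m + 1), matPow B n x w * φ w) ^ 2 := by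
        gcongr
        exact hB.pow_mul_le_sum_matPow hB0 hμ hφ hsub n x
    _ ≤ (∑ w ∈ range (m + 1), matPow B n x w * matPow B n w x) *
          ∑ w ∈ range (m + 1), ν w * φ w ^ 2 / ν x := by
        refine sum_sq_le_sum_mul_sum_of_sq_le_mul _
          (fun w _ => mul_nonneg (hB.matPow_nonneg hB0 n x w) (hB.matPow_nonneg hB0 n w x))
          (fun w _ => by have := hν w; have := hν x; positivity) fun w _ => le_of_eq ?_
        have hxw := hB.matPow_reversible hrev n x w
        field_simp [(hν x).ne']
        linear_combination matPow B n x w * φ w ^ 2 * hxw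
    _ ≤ _ := by gcongr; exact sum_nonneg fun w _ => by have := hν w; have := hν x; positivity

end IsNearestNeighbourKernel

open Real Topology

theorem bdB_isNearestNeighbourKernel (p : ℝ) : IsNearestNeighbourKernel (bdB p) := by
  intro a b h₁ h₂
  unfold bdB
  split_ifs <;> first | rfl | omega

theorem bdB_nonneg {p : ℝ} (hp0 : 0 ≤ p) (hp1 : p ≤ 1) (a b : ℕ) : 0 ≤ bdB p a b := by
  unfold bdB
  split_ifs <;> linarith

theorem bdB_reversible {p : ℝ} (hp1 : p < 1) (a b : ℕ) :
    (p / (1 - p)) ^ a * bdB p a b = (p / (1 - p)) ^ b * bdB p b a := by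
  have hq : 1 - p ≠ 0 := by linarith
  unfold bdB
  split_ifs <;> first | omega | rw [mul_zero, mul_zero] | skip
  · obtain rfl : b = a + 1 := by omega
    rw [pow_succ]; field_simp
  · obtain rfl : a = b + 1 := by omega
    rw [pow_succ]; field_simp

noncomputable def bdSineProfile (p : ℝ) (m y : ℕ) : ℝ :=
  if y ≤ m then (√(p * (1 - p)) / p) ^ y * sin (π / (m + 1) * y) else 0

theorem pi_div_succ_mul_lt_pi {m y : ℕ} (h : y ≤ m) : π / (m + 1) * y < π := by
  rw [div_mul_eq_mul_div, div_lt_iff₀ (by positivity)]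
  have : (y : ℝ) < m + 1 := by exact_mod_cast Nat.lt_succ_of_le h
  nlinarith [pi_pos]

theorem bdSineProfile_nonneg {p : ℝ} (hp0 : 0 < p) (hp1 : p < 1) (m y : ℕ) :
    0 ≤ bdSineProfile p m y := by
  unfold bdSineProfile
  split_ifs with h
  · have := sin_nonneg_of_nonneg_of_le_pi (by positivity) (pi_div_succ_mul_lt_pi h).le
    positivity
  · rfl

theorem bdSineProfile_pos {p : ℝ} (hp0 : 0 < p) (hp1 : p < 1) {m y : ℕ} (hy : 1 ≤ y)
    (hym : y ≤ m) : 0 < bdSineProfile p m y := by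
  have hpq : 0 < p * (1 - p) := by nlinarith
  rw [bdSineProfile, if_pos hym]
  have := sin_pos_of_pos_of_lt_pi (by positivity) (pi_div_succ_mul_lt_pi hym)
  positivity

theorem pow_mul_sin_recurrence {p r θ : ℝ} (hp : p ≠ 0) (hr : r ^ 2 = p * (1 - p)) (y : ℕ) :
    p * ((r / p) ^ (y + 2) * sin (θ * (y + 2))) + (1 - p) * ((r / p) ^ y * sin (θ * y)) =
      2 * r * cos θ * ((r / p) ^ (y + 1) * sin (θ * (y + 1))) := by
  have h₂ : θ * (y + 2) = θ * (y + 1) + θ := by ring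
  have h₀ : θ * y = θ * (y + 1) - θ := by ring
  have hs : p * (r / p) ^ 2 = 1 - p := by field_simp; linear_combination hr
  have hrs : r * (r / p) = 1 - p := by field_simp; linear_combination hr
  rw [h₂, h₀, sin_add, sin_sub, pow_succ, pow_succ]
  linear_combination ((r / p) ^ y * (sin (θ * (y + 1)) * cos θ + cos (θ * (y + 1)) * sin θ)) * hs
    - (2 * cos θ * (r / p) ^ y * sin (θ * (y + 1))) * hrs

theorem bdSineProfile_zero (p : ℝ) (m : ℕ) : bdSineProfile p m 0 = 0 := by
  simp [bdSineProfile]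

theorem bdSineProfile_eq_zero_of_lt {p : ℝ} {m y : ℕ} (h : m < y) : bdSineProfile p m y = 0 :=
  if_neg (by omega)

theorem bdSineProfile_of_le_succ {p : ℝ} {m y : ℕ} (hy : y ≤ m + 1) :
    bdSineProfile p m y = (√(p * (1 - p)) / p) ^ y * sin (π / (m + 1) * y) := by
  rw [bdSineProfile]
  split_ifs with h
  · rfl
  · obtain rfl : y = m + 1 := by omega
    rw [Nat.cast_add_one, div_mul_cancel₀ _ (by positivity), sin_pi, mul_zero]

theorem mul_bdSineProfile_le {p : ℝ} (hp0 : 0 < p) (hp1 : p < 1) (m y : ℕ) :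
    2 * √(p * (1 - p)) * cos (π / (m + 1)) * bdSineProfile p m y ≤
      bdB p y (y + 1) * bdSineProfile p m (y + 1) +
        bdB p y (y - 1) * bdSineProfile p m (y - 1) := by
  have hRHS := add_nonneg
    (mul_nonneg (bdB_nonneg hp0.le hp1.le y (y + 1)) (bdSineProfile_nonneg hp0 hp1 m (y + 1)))
    (mul_nonneg (bdB_nonneg hp0.le hp1.le y (y - 1)) (bdSineProfile_nonneg hp0 hp1 m (y - 1)))
  obtain _ | z := y
  · exact (mul_eq_zero_of_right _ (bdSineProfile_zero p m)).trans_le hRHS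
  by_cases hz : z + 1 ≤ m
  swap
  · exact (mul_eq_zero_of_right _ (if_neg hz)).trans_le hRHS
  have hup : bdB p (z + 1) (z + 1 + 1) = p := by simp [bdB]
  have hdown : bdB p (z + 1) z * bdSineProfile p m z
      = (1 - p) * bdSineProfile p m z := by
    obtain _ | z := z
    · simp [bdSineProfile_zero]
    · simp [bdB]
  rw [hup, Nat.add_sub_cancel, hdown, bdSineProfile_of_le_succ (by omega),
    bdSineProfile_of_le_succ (by omega), bdSineProfile_of_le_succ (by omega)]
  rw [show z + 1 + 1 = z + 2 from rfl]
  push_cast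
  exact (pow_mul_sin_recurrence hp0.ne' (sq_sqrt (by nlinarith)) z).ge

theorem exists_lt_two_mul_mul_cos_pi_div {a r : ℝ} (h : a < 2 * r) (x : ℕ) :
    ∃ m : ℕ, x ≤ m ∧ a < 2 * r * cos (π / (m + 1)) := by
  have hθ : Tendsto (fun m : ℕ => π / ((m : ℝ) + 1)) atTop (𝓝 0) := by
    simpa [Function.comp_def] using
      (tendsto_const_div_atTop_nhds_zero_nat π).comp (tendsto_add_atTop_nat 1)
  have hcos := ((continuous_cos.tendsto 0).comp hθ).const_mul (2 * r)
  rw [cos_zero, mul_one] at hcos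
  exact ((eventually_ge_atTop x).and (hcos.eventually (eventually_gt_nhds h))).exists

theorem exists_pos_mul_pow_le_matPow_bdB_diag {p : ℝ} (hp0 : 0 < p) (hp1 : p < 1) {m x : ℕ}
    (hx : 1 ≤ x) (hxm : x ≤ m) : ∃ c > 0, ∀ n : ℕ,
      c * (2 * √(p * (1 - p)) * cos (π / (m + 1))) ^ (2 * n) ≤ matPow (bdB p) (2 * n) x x := by
  set ν : ℕ → ℝ := fun a => (p / (1 - p)) ^ a
  have hν : ∀ a, 0 < ν a := fun a => pow_pos (div_pos hp0 (by linarith)) a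
  set C := ∑ w ∈ range (m + 1), ν w * bdSineProfile p m w ^ 2 / ν x
  have hφx := bdSineProfile_pos hp0 hp1 hx hxm
  have hC : 0 < C := by
    refine sum_pos' (fun w _ => by have := hν w; have := hν x; positivity)
      ⟨x, mem_range.2 (by omega), by have := hν x; positivity⟩
  have hμ : 0 ≤ 2 * √(p * (1 - p)) * cos (π / (m + 1)) := by
    have hm : (2 : ℝ) ≤ m + 1 := by norm_cast; omega
    have := cos_nonneg_of_mem_Icc
      ⟨by linarith [pi_pos, div_pos pi_pos (by positivity : (0 : ℝ) < m + 1)],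
        div_le_div_of_nonneg_left pi_pos.le two_pos hm⟩
    positivity
  refine ⟨bdSineProfile p m x ^ 2 / C, by positivity, fun n => ?_⟩
  have hbound := (bdB_isNearestNeighbourKernel p).sq_pow_mul_le_matPow_two_mul
    (bdB_nonneg hp0.le hp1.le) hν (bdB_reversible hp1) hμ
    (fun w hw => bdSineProfile_eq_zero_of_lt hw) (mul_bdSineProfile_le hp0 hp1 m) n x hφx.le
  rw [div_mul_eq_mul_div, div_le_iff₀ hC, pow_mul', ← mul_pow, mul_comm]
  exact hbound

theorem tendsto_sum_range_atTop_of_tendsto_two_mul {a : ℕ → ℝ} (ha : ∀ n, 0 ≤ a n)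
    (h : Tendsto (fun n => a (2 * n)) atTop atTop) :
    Tendsto (fun N => ∑ n ∈ range N, a n) atTop atTop :=
  (not_summable_iff_tendsto_nat_atTop_of_nonneg ha).1 fun hs =>
    not_tendsto_nhds_of_tendsto_atTop h 0
      (hs.tendsto_atTop_zero.comp (tendsto_id.const_mul_atTop' two_pos))

theorem stmt3 (p : ℝ) (hp0 : 0 < p) (hp1 : p < 1) (lam : ℝ)
    (hlam0 : 0 < lam) (hlam : lam < 2 * Real.sqrt (p * (1 - p)))
    (x : ℕ) (hx : 1 ≤ x) :
    Tendsto (fun N : ℕ => ∑ n ∈ Finset.range N, lam⁻¹ ^ n * matPow (bdB p) n x x)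
      atTop atTop := by
  obtain ⟨m, hxm, hμ⟩ := exists_lt_two_mul_mul_cos_pi_div hlam x
  obtain ⟨c, hc, hdiag⟩ := exists_pos_mul_pow_le_matPow_bdB_diag hp0 hp1 hx hxm
  set μ := 2 * √(p * (1 - p)) * cos (π / (m + 1))
  refine tendsto_sum_range_atTop_of_tendsto_two_mul (fun n => mul_nonneg
    (pow_nonneg (inv_nonneg.2 hlam0.le) n)
    ((bdB_isNearestNeighbourKernel p).matPow_nonneg (bdB_nonneg hp0.le hp1.le) n x x)) ?_
  refine tendsto_atTop_mono (fun n => ?_) ((tendsto_pow_atTop_atTop_of_one_lt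
    (one_lt_pow₀ ((one_lt_div hlam0).2 hμ) two_ne_zero)).const_mul_atTop hc)
  calc c * ((μ / lam) ^ 2) ^ n = lam⁻¹ ^ (2 * n) * (c * μ ^ (2 * n)) := by
        rw [← pow_mul, div_pow, div_eq_mul_inv, inv_pow]; ring
    _ ≤ lam⁻¹ ^ (2 * n) * matPow (bdB p) (2 * n) x x := by gcongr; exact hdiag n
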